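/- arXiv:1602.02787 — 4 statements merged into one kernel-verified Lean document; each statement's English description precedes it below -/
import Mathlib

section
/- Let f₀, f₁, ..., fₙ be a sequence of real polynomials such that (1) f₀ is a nonzero constant, and (2) whenever fₖ(x₀) = 0 for some 0 < k < n and real x₀, we have f_{k-1}(x₀) · f_{k+1}(x₀) < 0. Then fₙ has at least |var(f(-∞)) - var(f(∞))| distinct real roots, where var(f(±∞)) denotes the number of sign changes in the sequence of signs of (f₀(x), ..., fₙ(x)) for x sufficiently large positive (resp. negative). -/
/-!
The variation `varAt n f x` can change only where some `f k` vanishes, since between such points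
all signs are constant. At a zero `x₀` of `f k` with `0 < k < n`, the neighbours `f (k - 1)` and
`f (k + 1)` have opposite signs near `x₀`, so exactly one of the two sign changes at positions
`k - 1, k` and `k, k + 1` is present on either side of `x₀`. Hence crossing `x₀` changes the
variation only through the last pair, by at most one, and only if `f n x₀ = 0`; summing these
jumps over the roots between `xm` and `xp` gives the bound.
-/

open Polynomial Finset

/-- Variation: number of consecutive sign changes of `(f 0 x, ..., f n x)`. -/
noncomputable def varAt (n : ℕ) (f : ℕ → Polynomial ℝ) (x : ℝ) : ℕ :=
  ((Finset.range n).filter (fun k => (f k).eval x * (f (k+1)).eval x < 0)).card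

theorem sign_eq_of_forall_ne_zero {g : ℝ → ℝ} {x y : ℝ} (hg : ContinuousOn g (Set.uIcc x y))
    (h : ∀ t ∈ Set.uIcc x y, g t ≠ 0) : SignType.sign (g x) = SignType.sign (g y) := by
  by_contra hne
  have h0 : (0 : ℝ) ∈ Set.uIcc (g x) (g y) := by
    rcases (h x Set.left_mem_uIcc).lt_or_gt with hx | hx <;>
      rcases (h y Set.right_mem_uIcc).lt_or_gt with hy | hy <;>
      simp_all [Set.mem_uIcc, hx.le, hy.le, sign_neg, sign_pos]
  obtain ⟨t, ht, ht0⟩ := intermediate_value_uIcc hg h0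
  exact h t ht ht0

section SignChange

variable {α : Type*} [Ring α] [LinearOrder α] [IsStrictOrderedRing α]

theorem mul_neg_iff_of_sign_eq {a b a' b' : α} (ha : SignType.sign a = SignType.sign a')
    (hb : SignType.sign b = SignType.sign b') : a * b < 0 ↔ a' * b' < 0 := by
  rw [← sign_eq_neg_one_iff, sign_mul, ha, hb, ← sign_mul, sign_eq_neg_one_iff]

theorem ite_mul_neg_add_ite_mul_neg {a m b : α} (hab : a * b < 0) (hm : m ≠ 0) :
    ((if a * m < 0 then 1 else 0) + (if m * b < 0 then 1 else 0) : ℕ) = 1 := by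
  rcases mul_neg_iff.1 hab with ⟨ha, hb⟩ | ⟨ha, hb⟩ <;> rcases hm.lt_or_gt with hm | hm <;>
    simp [mul_neg_iff, ha, hb, hm, ha.le, hb.le, hm.le, not_lt.2]

end SignChange

theorem varAt_succ (m : ℕ) (f : ℕ → ℝ[X]) (x : ℝ) :
    varAt (m + 1) f x = varAt m f x + if (f m).eval x * (f (m + 1)).eval x < 0 then 1 else 0 := by
  simp only [varAt, range_add_one, filter_insert]
  split_ifs
  · exact card_insert_of_notMem fun hm => (mem_range.1 (mem_filter.1 hm).1).false
  · rfl

theorem varAt_congr_of_sign_eq {n : ℕ} {f : ℕ → ℝ[X]} {x y : ℝ}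
    (h : ∀ k ≤ n, SignType.sign ((f k).eval x) = SignType.sign ((f k).eval y)) :
    varAt n f x = varAt n f y := by
  refine congrArg card (filter_congr fun k hk => ?_)
  have hk := mem_range.1 hk
  exact mul_neg_iff_of_sign_eq (h k hk.le) (h (k + 1) hk)

section Crossing

variable {n : ℕ} {f : ℕ → ℝ[X]} {x₀ a c : ℝ}

theorem varAt_eq_of_eval_ne_zero (h0 : (f 0).eval x₀ ≠ 0)
    (h2 : ∀ k, 0 < k → k < n → (f k).eval x₀ = 0 →
      (f (k - 1)).eval x₀ * (f (k + 1)).eval x₀ < 0)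
    (ha : ∀ k ≤ n, (f k).eval a ≠ 0) (hc : ∀ k ≤ n, (f k).eval c ≠ 0)
    (hsa : ∀ k ≤ n, (f k).eval x₀ ≠ 0 →
      SignType.sign ((f k).eval a) = SignType.sign ((f k).eval x₀))
    (hsc : ∀ k ≤ n, (f k).eval x₀ ≠ 0 →
      SignType.sign ((f k).eval c) = SignType.sign ((f k).eval x₀))
    {m : ℕ} (hm : m ≤ n) (hm0 : (f m).eval x₀ ≠ 0) : varAt m f a = varAt m f c := by
  induction m using Nat.strong_induction_on with
  | _ m ih =>
  match m with
  | 0 => rfl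
  | j + 1 =>
    by_cases hj : (f j).eval x₀ = 0
    · obtain ⟨i, rfl⟩ : ∃ i, j = i + 1 :=
        Nat.exists_eq_succ_of_ne_zero (by rintro rfl; exact h0 hj)
      have hi : (f i).eval x₀ * (f (i + 1 + 1)).eval x₀ < 0 := h2 (i + 1) i.succ_pos hm hj
      have hi0 : (f i).eval x₀ ≠ 0 := left_ne_zero_of_mul hi.ne
      have hsign {y : ℝ} (hy : ∀ k ≤ n, (f k).eval x₀ ≠ 0 →
          SignType.sign ((f k).eval y) = SignType.sign ((f k).eval x₀)) :
          (f i).eval y * (f (i + 1 + 1)).eval y < 0 :=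
        (mul_neg_iff_of_sign_eq (hy i (by omega) hi0) (hy (i + 1 + 1) hm hm0)).2 hi
      rw [varAt_succ, varAt_succ, varAt_succ, varAt_succ,
        add_assoc (varAt i f a), add_assoc (varAt i f c),
        ite_mul_neg_add_ite_mul_neg (hsign hsa) (ha (i + 1) (by omega)),
        ite_mul_neg_add_ite_mul_neg (hsign hsc) (hc (i + 1) (by omega)),
        ih i (by omega) (by omega) hi0]
    · simp only [varAt_succ, ih j (by omega) (by omega) hj,
        mul_neg_iff_of_sign_eq (hsa j (by omega) hj) (hsa (j + 1) hm hm0),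
        mul_neg_iff_of_sign_eq (hsc j (by omega) hj) (hsc (j + 1) hm hm0)]

theorem abs_varAt_sub_varAt_le (h0 : (f 0).eval x₀ ≠ 0)
    (h2 : ∀ k, 0 < k → k < n → (f k).eval x₀ = 0 →
      (f (k - 1)).eval x₀ * (f (k + 1)).eval x₀ < 0)
    (ha : ∀ k ≤ n, (f k).eval a ≠ 0) (hc : ∀ k ≤ n, (f k).eval c ≠ 0)
    (hsa : ∀ k ≤ n, (f k).eval x₀ ≠ 0 →
      SignType.sign ((f k).eval a) = SignType.sign ((f k).eval x₀))
    (hsc : ∀ k ≤ n, (f k).eval x₀ ≠ 0 →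
      SignType.sign ((f k).eval c) = SignType.sign ((f k).eval x₀)) :
    |(varAt n f a : ℤ) - varAt n f c| ≤ ((if (f n).eval x₀ = 0 then 1 else 0 : ℕ) : ℤ) := by
  by_cases hn : (f n).eval x₀ = 0
  · obtain ⟨j, rfl⟩ : ∃ j, n = j + 1 :=
      Nat.exists_eq_succ_of_ne_zero (by rintro rfl; exact h0 hn)
    have hj : (f j).eval x₀ ≠ 0 := by
      rintro hj
      rcases j with _ | i
      · exact h0 hj
      · simpa [hn] using h2 (i + 1) i.succ_pos (by omega) hj
    rw [varAt_succ, varAt_succ,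
      varAt_eq_of_eval_ne_zero h0 h2 ha hc hsa hsc (Nat.le_succ j) hj]
    split_ifs <;> simp
  · rw [varAt_eq_of_eval_ne_zero h0 h2 ha hc hsa hsc le_rfl hn]
    simp [hn]

end Crossing

theorem abs_sub_le_sum_of_jump_le {g : ℝ → ℤ} {w : ℝ → ℕ} {Z : Finset ℝ}
    (hconst : ∀ x y, x ≤ y → (∀ t ∈ Z, t ∉ Set.Icc x y) → g x = g y)
    (hjump : ∀ z x y, x < z → z < y → (∀ t ∈ Z, t ∈ Set.Icc x y → t = z) →
      |g x - g y| ≤ w z)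
    {a b : ℝ} (hab : a ≤ b) (ha : a ∉ Z) (hb : b ∉ Z) :
    |g a - g b| ≤ ∑ z ∈ Z with z ∈ Set.Ioo a b, (w z : ℤ) := by
  suffices key : ∀ S : Finset ℝ, ∀ b, a ≤ b → b ∉ Z → (∀ t ∈ Z, t ∈ Set.Ioo a b → t ∈ S) →
      |g a - g b| ≤ ∑ z ∈ S, (w z : ℤ) from
    key _ b hab hb fun t ht htab => mem_filter.2 ⟨ht, htab⟩
  intro S
  induction S using Finset.induction_on_max with
  | empty =>
    intro b hab hb hS
    rw [hconst a b hab fun t ht htab => ?_, sub_self, abs_zero, sum_empty]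
    have hta : t ≠ a := by rintro rfl; exact ha ht
    have htb : t ≠ b := by rintro rfl; exact hb ht
    exact notMem_empty t (hS t ht ⟨htab.1.lt_of_ne' hta, htab.2.lt_of_ne htb⟩)
  | insert z T hzT ih =>
    intro b hab hb hS
    by_cases hz : z ∈ Set.Ioo a b
    · -- split `[a, b]` at a point `x` separating `z` from the smaller points of `T`
      set m := (insert a T).max' (insert_nonempty a T)
      have hmz : m < z := (max'_lt_iff _ _).2 fun t ht =>
        (mem_insert.1 ht).elim (fun h => h ▸ hz.1) (hzT t)
      have ham : a ≤ m := le_max' _ a (mem_insert_self a T)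
      have hTm : ∀ t ∈ T, t ≤ m := fun t ht => le_max' _ t (mem_insert_of_mem ht)
      obtain ⟨x, hmx, hxz⟩ := exists_between hmz
      have hZx : ∀ t ∈ Z, a < t → t ≤ b → t < x ∨ t = z := by
        intro t ht hat htb
        rcases htb.lt_or_eq with htb | rfl
        · rcases mem_insert.1 (hS t ht ⟨hat, htb⟩) with rfl | htT
          · exact .inr rfl
          · exact .inl ((hTm t htT).trans_lt hmx)
        · exact absurd ht hb
      have hxZ : x ∉ Z := fun hx => by
        rcases hZx x hx (by linarith) (by linarith [hz.2]) with h | h <;> linarith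
      calc |g a - g b| ≤ |g a - g x| + |g x - g b| := abs_sub_le _ _ _
        _ ≤ ∑ t ∈ T, (w t : ℤ) + w z := by
          refine add_le_add (ih x (by linarith) hxZ fun t ht htx => ?_)
            (hjump z x b hxz hz.2 ?_)
          · rcases mem_insert.1 (hS t ht ⟨htx.1, htx.2.trans (hxz.trans hz.2)⟩) with rfl | htT
            · exact absurd htx.2 hxz.not_gt
            · exact htT
          · intro t ht htxb
            exact (hZx t ht (by linarith [htxb.1]) htxb.2).resolve_left htxb.1.not_gt
        _ = ∑ t ∈ insert z T, (w t : ℤ) := by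
          rw [sum_insert fun h => (hzT z h).false, add_comm]
    · calc |g a - g b| ≤ ∑ t ∈ T, (w t : ℤ) := ih b hab hb fun t ht htab =>
            (mem_insert.1 (hS t ht htab)).resolve_left (by rintro rfl; exact hz htab)
        _ ≤ ∑ t ∈ insert z T, (w t : ℤ) :=
          sum_le_sum_of_subset_of_nonneg (subset_insert _ _) fun _ _ _ => Nat.cast_nonneg _

theorem abs_varAt_sub_varAt_le_card_roots {n : ℕ} {f : ℕ → ℝ[X]}
    (h0 : ∀ x, (f 0).eval x ≠ 0)
    (h2 : ∀ k, 0 < k → k < n → ∀ x, (f k).eval x = 0 →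
      (f (k - 1)).eval x * (f (k + 1)).eval x < 0)
    {a b : ℝ} (hab : a ≤ b) (ha : ∀ k ≤ n, (f k).eval a ≠ 0) (hb : ∀ k ≤ n, (f k).eval b ≠ 0) :
    |(varAt n f a : ℤ) - varAt n f b| ≤ #{x ∈ (f n).roots.toFinset | x ∈ Set.Ioo a b} := by
  set Z := (range (n + 1)).biUnion fun k => (f k).roots.toFinset
  have mem_roots_toFinset {k t} (hk : k ≤ n) (ht : (f k).eval t = 0) :
      t ∈ (f k).roots.toFinset :=
    Multiset.mem_toFinset.2 ((mem_roots fun h => ha k hk (by simp [h])).2 ht)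
  have mem_Z {k t} (hk : k ≤ n) (ht : (f k).eval t = 0) : t ∈ Z :=
    mem_biUnion.2 ⟨k, mem_range.2 (Nat.lt_succ_of_le hk), mem_roots_toFinset hk ht⟩
  have notMem_Z {t} (ht : ∀ k ≤ n, (f k).eval t ≠ 0) : t ∉ Z := by
    simp only [Z, mem_biUnion, mem_range, Multiset.mem_toFinset, not_exists, not_and]
    exact fun k hk h => ht k (Nat.le_of_lt_succ hk) (isRoot_of_mem_roots h)
  have hsign {k x y} (hk : k ≤ n) (hxy : x ≤ y) (hZ : ∀ t ∈ Set.Icc x y, (f k).eval t ≠ 0) :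
      SignType.sign ((f k).eval x) = SignType.sign ((f k).eval y) :=
    sign_eq_of_forall_ne_zero (f k).continuous.continuousOn (Set.uIcc_of_le hxy ▸ hZ)
  have hconst (x y) (hxy : x ≤ y) (hZ : ∀ t ∈ Z, t ∉ Set.Icc x y) :
      (varAt n f x : ℤ) = varAt n f y :=
    congrArg _ <| varAt_congr_of_sign_eq fun k hk =>
      hsign hk hxy fun t ht h => hZ t (mem_Z hk h) ht
  have hjump (z x y) (hxz : x < z) (hzy : z < y) (hZ : ∀ t ∈ Z, t ∈ Set.Icc x y → t = z) :
      |(varAt n f x : ℤ) - varAt n f y| ≤ ((if (f n).eval z = 0 then 1 else 0 : ℕ) : ℤ) := by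
    have hroot {k t} (hk : k ≤ n) (ht : t ∈ Set.Icc x y) (h : (f k).eval t = 0) : t = z :=
      hZ t (mem_Z hk h) ht
    refine abs_varAt_sub_varAt_le (h0 z) (fun k hk hkn => h2 k hk hkn z)
      (fun k hk h => hxz.ne (hroot hk ⟨le_rfl, (hxz.trans hzy).le⟩ h))
      (fun k hk h => hzy.ne' (hroot hk ⟨(hxz.trans hzy).le, le_rfl⟩ h))
      (fun k hk hz => hsign hk hxz.le fun t ht h =>
        hz (hroot hk ⟨ht.1, ht.2.trans hzy.le⟩ h ▸ h))
      (fun k hk hz => (hsign hk hzy.le fun t ht h =>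
        hz (hroot hk ⟨hxz.le.trans ht.1, ht.2⟩ h ▸ h)).symm)
  calc |(varAt n f a : ℤ) - varAt n f b|
      ≤ ∑ t ∈ Z with t ∈ Set.Ioo a b, ((if (f n).eval t = 0 then 1 else 0 : ℕ) : ℤ) :=
        abs_sub_le_sum_of_jump_le hconst hjump hab (notMem_Z ha) (notMem_Z hb)
    _ = #{t ∈ Z | t ∈ Set.Ioo a b ∧ (f n).eval t = 0} := by
        rw [← filter_filter, card_filter, Nat.cast_sum]
    _ ≤ #{x ∈ (f n).roots.toFinset | x ∈ Set.Ioo a b} := by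
        refine Nat.cast_le.2 (card_le_card fun t ht => ?_)
        simp only [mem_filter] at ht ⊢
        exact ⟨mem_roots_toFinset le_rfl ht.2.2, ht.2.1⟩

theorem stmt_0 (n : ℕ) (f : ℕ → Polynomial ℝ)
    (h0 : ∃ c : ℝ, c ≠ 0 ∧ f 0 = Polynomial.C c)
    (h2 : ∀ k : ℕ, 0 < k → k < n → ∀ x₀ : ℝ, (f k).eval x₀ = 0 →
      (f (k-1)).eval x₀ * (f (k+1)).eval x₀ < 0)
    (xm xp : ℝ)
    (hroots : ∀ k ≤ n, ∀ x : ℝ, (f k).eval x = 0 → xm < x ∧ x < xp) :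
    |(varAt n f xm : ℤ) - (varAt n f xp : ℤ)| ≤ ((f n).roots.toFinset.card : ℤ) := by
  obtain ⟨c, hc, hfc⟩ := h0
  have hf0 (x : ℝ) : (f 0).eval x ≠ 0 := by simpa [hfc] using hc
  have hm : ∀ k ≤ n, (f k).eval xm ≠ 0 := fun k hk h => (hroots k hk xm h).1.false
  have hp : ∀ k ≤ n, (f k).eval xp ≠ 0 := fun k hk h => (hroots k hk xp h).2.false
  have hcard (a b : ℝ) :
      (#{x ∈ (f n).roots.toFinset | x ∈ Set.Ioo a b} : ℤ) ≤ #(f n).roots.toFinset :=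
    Nat.cast_le.2 (card_filter_le _ _)
  rcases le_total xm xp with h | h
  · exact (abs_varAt_sub_varAt_le_card_roots hf0 h2 h hm hp).trans (hcard _ _)
  · rw [abs_sub_comm]
    exact (abs_varAt_sub_varAt_le_card_roots hf0 h2 h hp hm).trans (hcard _ _)
end

section
/- Let aₖ, bₖ be as in the recurrence a₀ = 1, b₀ = 0, aₖ = (1 + δₖx)a_{k-1} + (ηₖx)b_{k-1}, bₖ = εₖa_{k-1} + b_{k-1} with εᵢ, ηᵢ ∈ {±1}, δᵢ = εᵢηᵢ, and assume that for all real x, aₖ(x) and bₖ(x) are not both zero (for each k). If 0 < k < n and aₖ(x₀) = 0 for some real x₀, then a_{k-1}(x₀) ≠ 0, a_{k+1}(x₀) ≠ 0, and sign(a_{k-1}(x₀))·sign(a_{k+1}(x₀)) = -ηₖ·η_{k+1}. -/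
open Polynomial

/-!
Since `a_k(0) = 1` for every `k`, a root `x₀` of `a_k` is nonzero. Each step of the recurrence can
be rewritten as `a_k = a_{k-1} + η_k X b_k`, so at `x₀` we get `η_k x₀ b_k(x₀) = -a_{k-1}(x₀)`;
this forces `a_{k-1}(x₀) ≠ 0`, as otherwise `a_k` and `b_k` would vanish together at `x₀`. Finally
`a_{k+1}(x₀) = η_{k+1} x₀ b_k(x₀) = -η_k η_{k+1} a_{k-1}(x₀)`.
-/

lemma Real.sign_mul_sign_mul_self {u r : ℝ} (hu : u = 1 ∨ u = -1) (hr : r ≠ 0) :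
    Real.sign r * Real.sign (u * r) = u := by
  rcases hu with rfl | rfl <;>
    rcases Real.sign_apply_eq_of_ne_zero r hr with h | h <;>
    simp [Real.sign_neg, h]

lemma eval_zero_eq_one_of_recurrence {n : ℕ} {ε η : ℕ → ℝ} {a b : ℕ → ℝ[X]} (ha0 : a 0 = 1)
    (ha : ∀ k, 1 ≤ k → k ≤ n →
      a k = (1 + C (ε k * η k) * X) * a (k - 1) + C (η k) * X * b (k - 1)) :
    ∀ j ≤ n, (a j).eval 0 = 1
  | 0, _ => by simp [ha0]
  | j + 1, hj => by
    rw [ha (j + 1) (by omega) hj]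
    simp [eval_zero_eq_one_of_recurrence ha0 ha j (by omega)]

lemma recurrence_step_eq (p q : ℝ[X]) (e h : ℝ) :
    (1 + C (e * h) * X) * p + C h * X * q = p + C h * X * (C e * p + q) := by
  rw [C_mul]; ring

theorem stmt_8_general (n : ℕ) (ε η : ℕ → ℝ)
    (hη : ∀ i, η i = 1 ∨ η i = -1)
    (a b : ℕ → Polynomial ℝ)
    (ha0 : a 0 = 1)
    (ha : ∀ k, 1 ≤ k → k ≤ n →
      a k = (1 + Polynomial.C (ε k * η k) * Polynomial.X) * a (k-1)
            + Polynomial.C (η k) * Polynomial.X * b (k-1))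
    (hb : ∀ k, 1 ≤ k → k ≤ n →
      b k = Polynomial.C (ε k) * a (k-1) + b (k-1))
    (hnv : ∀ k ≤ n, ∀ x : ℝ, ¬((a k).eval x = 0 ∧ (b k).eval x = 0))
    (k : ℕ) (hk1 : 0 < k) (hk2 : k < n) (x₀ : ℝ) (hroot : (a k).eval x₀ = 0) :
    (a (k-1)).eval x₀ ≠ 0 ∧ (a (k+1)).eval x₀ ≠ 0 ∧
    Real.sign ((a (k-1)).eval x₀) * Real.sign ((a (k+1)).eval x₀) = -(η k * η (k+1)) := by
  have hη_sq (i : ℕ) : η i * η i = 1 := by rcases hη i with h | h <;> simp [h]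
  have hη_ne (i : ℕ) : η i ≠ 0 := left_ne_zero_of_mul_eq_one (hη_sq i)
  have hx₀ : x₀ ≠ 0 := by
    rintro rfl
    simp [eval_zero_eq_one_of_recurrence ha0 ha k hk2.le] at hroot
  have hb_root : η k * x₀ * (b k).eval x₀ = -(a (k - 1)).eval x₀ := by
    rw [ha k hk1 hk2.le, recurrence_step_eq, ← hb k hk1 hk2.le] at hroot
    simp only [eval_add, eval_mul, eval_C, eval_X] at hroot
    linarith
  have hprev : (a (k - 1)).eval x₀ ≠ 0 := by
    intro h
    rw [h, neg_zero] at hb_root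
    exact hnv k hk2.le x₀ ⟨hroot, by simpa [hη_ne k, hx₀] using hb_root⟩
  have hnext : (a (k + 1)).eval x₀ = -(η k * η (k + 1)) * (a (k - 1)).eval x₀ := by
    rw [ha (k + 1) (by omega) hk2, Nat.add_sub_cancel]
    simp only [eval_add, eval_mul, eval_C, eval_X, hroot]
    linear_combination (η (k + 1) * η k) * hb_root - (η (k + 1) * x₀ * (b k).eval x₀) * hη_sq k
  have hsign : -(η k * η (k + 1)) = 1 ∨ -(η k * η (k + 1)) = -1 := by
    rcases hη k with h | h <;> rcases hη (k + 1) with h' | h' <;> simp [h, h']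
  refine ⟨hprev, ?_, ?_⟩
  · rw [hnext]
    exact mul_ne_zero (neg_ne_zero.mpr (mul_ne_zero (hη_ne k) (hη_ne (k + 1)))) hprev
  · rw [hnext]
    exact Real.sign_mul_sign_mul_self hsign hprev

theorem stmt_8 (n : ℕ) (ε η : ℕ → ℝ)
    (hε : ∀ i, ε i = 1 ∨ ε i = -1) (hη : ∀ i, η i = 1 ∨ η i = -1)
    (a b : ℕ → Polynomial ℝ)
    (ha0 : a 0 = 1) (hb0 : b 0 = 0)
    (ha : ∀ k, 1 ≤ k → k ≤ n →
      a k = (1 + Polynomial.C (ε k * η k) * Polynomial.X) * a (k-1)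
            + Polynomial.C (η k) * Polynomial.X * b (k-1))
    (hb : ∀ k, 1 ≤ k → k ≤ n →
      b k = Polynomial.C (ε k) * a (k-1) + b (k-1))
    (hnv : ∀ k ≤ n, ∀ x : ℝ, ¬((a k).eval x = 0 ∧ (b k).eval x = 0))
    (k : ℕ) (hk1 : 0 < k) (hk2 : k < n) (x₀ : ℝ) (hroot : (a k).eval x₀ = 0) :
    (a (k-1)).eval x₀ ≠ 0 ∧ (a (k+1)).eval x₀ ≠ 0 ∧
    Real.sign ((a (k-1)).eval x₀) * Real.sign ((a (k+1)).eval x₀) = -(η k * η (k+1)) :=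
  stmt_8_general n ε η hη a b ha0 ha hb hnv k hk1 hk2 x₀ hroot
end

section
/- Let ε₁,...,εₙ, η₁,...,ηₙ ∈ {±1} with εᵢ = η_{n+1-i} for all 1 ≤ i ≤ n, δᵢ = εᵢηᵢ, and let aₖ, bₖ be defined by a₀ = 1, b₀ = 0, aₖ = (1 + δₖx)a_{k-1} + (ηₖx)b_{k-1}, bₖ = εₖa_{k-1} + b_{k-1}. Assume that for each k and each real x, aₖ(x) and bₖ(x) are not both zero. Then the polynomial aₙ has at least |∑_{k=1}^{n} εₖ| distinct real roots. -/
open Polynomial Finset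

/-!
Write `I(g/f)` for the Cauchy index over `ℝ`. Substituting `bₖ` into the recurrence for `aₖ`
gives `bₖ = bₖ₋₁ + εₖ aₖ₋₁` and `aₖ = aₖ₋₁ + ηₖ X bₖ`. Hence `deg aₖ = k`, `deg bₖ = k - 1`, the
leading coefficient of `aₖ bₖ` has the sign of `ηₖ`, and `aₖ, bₖ` never vanish together since
`aₖ₋₁, bₖ₋₁` are recovered from them. The Cauchy index is unchanged under `g ↦ g + h f`, and by
reciprocity `I(g/f) + I(f/g)` is half the difference of the signs of `f g` at `+∞` and `-∞`. So
`I(bₖ/aₖ) = -I(aₖ/bₖ) + ηₖ = -I(aₖ₋₁/bₖ) + ηₖ = I(bₖ/aₖ₋₁) + ηₖ = I(bₖ₋₁/aₖ₋₁) + ηₖ`,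
whence `I(bₙ/aₙ) = ∑ ηₖ = ∑ εₖ` by the symmetry `εᵢ = ηₙ₊₁₋ᵢ`. Each real root of `aₙ`
contributes at most `1` to `|I(bₙ/aₙ)|`.

Reciprocity says that the sign jumps of `f g` at its real roots add up to the difference of
its signs at `±∞`: the sign of a polynomial just right of `x`, minus the sum of its jumps at
the roots `≤ x`, is a locally constant function of `x`, hence constant on `ℝ`.
-/

open Filter Topology Asymptotics SignType

noncomputable section

theorem Asymptotics.IsEquivalent.eventually_sign_eq {α : Type*} {l : Filter α} {u v : α → ℝ}
    (h : u ~[l] v) : ∀ᶠ x in l, sign (u x) = sign (v x) := by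
  obtain ⟨φ, hφ, h_eq⟩ := h.exists_pos_eq_mul
  filter_upwards [hφ, h_eq] with x hφx hx
  rw [hx, Pi.mul_apply, sign_mul, sign_pos hφx, one_mul]

theorem eventually_filter_le_nhdsGT (s : Finset ℝ) (r : ℝ) :
    ∀ᶠ x in 𝓝[>] r, {t ∈ s | t ≤ x} = {t ∈ s | t ≤ r} := by
  have : ∀ t ∈ s, ∀ᶠ x in 𝓝[>] r, (t ≤ x ↔ t ≤ r) := by
    intro t _
    rcases le_or_gt t r with htr | hrt
    · filter_upwards [self_mem_nhdsWithin] with x (hx : r < x)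
      exact iff_of_true (htr.trans hx.le) htr
    · filter_upwards [nhdsWithin_le_nhds (eventually_lt_nhds hrt)] with x hx
      exact iff_of_false (not_le.2 hx) (not_le.2 hrt)
  filter_upwards [(eventually_all_finset s).2 this] with x hx
  exact filter_congr hx

theorem eventually_filter_le_nhdsLT (s : Finset ℝ) (r : ℝ) :
    ∀ᶠ x in 𝓝[<] r, {t ∈ s | t ≤ x} = {t ∈ s | t < r} := by
  have : ∀ t ∈ s, ∀ᶠ x in 𝓝[<] r, (t ≤ x ↔ t < r) := by
    intro t _
    rcases lt_or_ge t r with htr | hrt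
    · filter_upwards [nhdsWithin_le_nhds (eventually_gt_nhds htr)] with x hx
      exact iff_of_true hx.le htr
    · filter_upwards [self_mem_nhdsWithin] with x (hx : x < r)
      exact iff_of_false (not_le.2 (hx.trans_le hrt)) (not_lt.2 hrt)
  filter_upwards [(eventually_all_finset s).2 this] with x hx
  exact filter_congr hx

namespace Polynomial

theorem eventually_sign_eval_atTop (p : ℝ[X]) :
    ∀ᶠ x in atTop, sign (p.eval x) = sign p.leadingCoeff := by
  filter_upwards [p.isEquivalent_atTop_lead.eventually_sign_eq, eventually_gt_atTop (0 : ℝ)]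
    with x hx hx0
  rw [hx, sign_mul, sign_pow, sign_pos hx0, one_pow, mul_one]

theorem eventually_sign_eval_atBot (p : ℝ[X]) :
    ∀ᶠ x in atBot, sign (p.eval x) = (-1) ^ p.natDegree * sign p.leadingCoeff := by
  filter_upwards [p.isEquivalent_atBot_lead.eventually_sign_eq, eventually_lt_atBot (0 : ℝ)]
    with x hx hx0
  rw [hx, sign_mul, sign_pow, sign_neg hx0, mul_comm]

/-- Writing `p = (X - r) ^ μ * q` with `q.eval r ≠ 0`, the polynomial `p` has the sign of
`q.eval r` just right of `r`, and that of `(-1) ^ μ * q.eval r` just left of `r`. -/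
def rightSign (p : ℝ[X]) (r : ℝ) : SignType :=
  sign ((p /ₘ (X - C r) ^ p.rootMultiplicity r).eval r)

def leftSign (p : ℝ[X]) (r : ℝ) : SignType :=
  (-1) ^ p.rootMultiplicity r * p.rightSign r

theorem eval_eq_pow_rootMultiplicity_mul (p : ℝ[X]) (r x : ℝ) :
    p.eval x = (x - r) ^ p.rootMultiplicity r * (p /ₘ (X - C r) ^ p.rootMultiplicity r).eval x := by
  conv_lhs => rw [← pow_mul_divByMonic_rootMultiplicity_eq p r]
  simp

theorem eventually_sign_eval_divByMonic (p : ℝ[X]) (r : ℝ) :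
    ∀ᶠ x in 𝓝 r, sign ((p /ₘ (X - C r) ^ p.rootMultiplicity r).eval x) = p.rightSign r := by
  rcases eq_or_ne p 0 with rfl | hp
  · simp [rightSign]
  · have hq : ContinuousAt (fun x => (p /ₘ (X - C r) ^ p.rootMultiplicity r).eval x) r :=
      (p /ₘ (X - C r) ^ p.rootMultiplicity r).continuous.continuousAt
    have hsign := continuousAt_sign_of_ne_zero (eval_divByMonic_pow_rootMultiplicity_ne_zero r hp)
    exact tendsto_pure.1 <| nhds_discrete SignType ▸ hsign.comp (x := r) hq

theorem eventually_sign_eval_nhdsGT (p : ℝ[X]) (r : ℝ) :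
    ∀ᶠ x in 𝓝[>] r, sign (p.eval x) = p.rightSign r := by
  filter_upwards [nhdsWithin_le_nhds (p.eventually_sign_eval_divByMonic r), self_mem_nhdsWithin]
    with x hx (hrx : r < x)
  rw [p.eval_eq_pow_rootMultiplicity_mul r, sign_mul, hx, sign_pow, sign_pos (sub_pos.2 hrx),
    one_pow, one_mul]

theorem eventually_sign_eval_nhdsLT (p : ℝ[X]) (r : ℝ) :
    ∀ᶠ x in 𝓝[<] r, sign (p.eval x) = p.leftSign r := by
  filter_upwards [nhdsWithin_le_nhds (p.eventually_sign_eval_divByMonic r), self_mem_nhdsWithin]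
    with x hx (hxr : x < r)
  rw [p.eval_eq_pow_rootMultiplicity_mul r, sign_mul, hx, sign_pow, sign_neg (sub_neg.2 hxr),
    leftSign]

theorem rightSign_of_not_isRoot {p : ℝ[X]} {r : ℝ} (h : ¬p.IsRoot r) :
    p.rightSign r = sign (p.eval r) := by
  simp [rightSign, rootMultiplicity_eq_zero h]

theorem leftSign_of_not_isRoot {p : ℝ[X]} {r : ℝ} (h : ¬p.IsRoot r) :
    p.leftSign r = sign (p.eval r) := by
  simp [leftSign, rightSign_of_not_isRoot h, rootMultiplicity_eq_zero h]

theorem rightSign_ne_zero {p : ℝ[X]} (hp : p ≠ 0) (r : ℝ) : p.rightSign r ≠ 0 :=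
  sign_ne_zero.2 (eval_divByMonic_pow_rootMultiplicity_ne_zero r hp)

theorem leftSign_ne_zero {p : ℝ[X]} (hp : p ≠ 0) (r : ℝ) : p.leftSign r ≠ 0 :=
  mul_ne_zero (pow_ne_zero _ (by decide)) (rightSign_ne_zero hp r)

theorem rightSign_mul (p q : ℝ[X]) (r : ℝ) :
    (p * q).rightSign r = p.rightSign r * q.rightSign r := by
  obtain ⟨x, hpq, hp, hq⟩ := ((eventually_sign_eval_nhdsGT (p * q) r).and
    ((eventually_sign_eval_nhdsGT p r).and (eventually_sign_eval_nhdsGT q r))).exists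
  rw [← hpq, ← hp, ← hq, eval_mul, sign_mul]

theorem leftSign_mul (p q : ℝ[X]) (r : ℝ) :
    (p * q).leftSign r = p.leftSign r * q.leftSign r := by
  obtain ⟨x, hpq, hp, hq⟩ := ((eventually_sign_eval_nhdsLT (p * q) r).and
    ((eventually_sign_eval_nhdsLT p r).and (eventually_sign_eval_nhdsLT q r))).exists
  rw [← hpq, ← hp, ← hq, eval_mul, sign_mul]

theorem rightSign_eq_of_sign_eval {p : ℝ[X]} {x : ℝ} {s : SignType} (hs : s ≠ 0)
    (h : sign (p.eval x) = s) : p.rightSign x = s := by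
  have : ¬p.IsRoot x := fun hx => hs (by rw [← h, hx.eq_zero, sign_zero])
  rw [rightSign_of_not_isRoot this, h]

theorem eventually_rightSign_nhdsGT {p : ℝ[X]} (hp : p ≠ 0) (r : ℝ) :
    ∀ᶠ x in 𝓝[>] r, p.rightSign x = p.rightSign r := by
  filter_upwards [eventually_sign_eval_nhdsGT p r] with x hx
  exact rightSign_eq_of_sign_eval (rightSign_ne_zero hp r) hx

theorem eventually_rightSign_nhdsLT {p : ℝ[X]} (hp : p ≠ 0) (r : ℝ) :
    ∀ᶠ x in 𝓝[<] r, p.rightSign x = p.leftSign r := by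
  filter_upwards [eventually_sign_eval_nhdsLT p r] with x hx
  exact rightSign_eq_of_sign_eval (leftSign_ne_zero hp r) hx

def signJump (p : ℝ[X]) (r : ℝ) : ℤ :=
  p.rightSign r - p.leftSign r

theorem signJump_of_not_isRoot {p : ℝ[X]} {r : ℝ} (h : ¬p.IsRoot r) : p.signJump r = 0 := by
  rw [signJump, rightSign_of_not_isRoot h, leftSign_of_not_isRoot h, sub_self]

theorem signJump_mul_of_not_isRoot {p q : ℝ[X]} {r : ℝ} (h : ¬q.IsRoot r) :
    (p * q).signJump r = sign (q.eval r) * p.signJump r := by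
  simp only [signJump, rightSign_mul, leftSign_mul, rightSign_of_not_isRoot h,
    leftSign_of_not_isRoot h, SignType.coe_mul]
  ring

theorem sum_filter_le_signJump {p : ℝ[X]} (hp : p ≠ 0) (r : ℝ) :
    ∑ t ∈ p.roots.toFinset with t ≤ r, p.signJump t
      = ∑ t ∈ p.roots.toFinset with t < r, p.signJump t + p.signJump r := by
  rw [← sum_filter_add_sum_filter_not _ (· < r), filter_filter, filter_filter]
  congr 1
  · exact sum_congr (filter_congr fun t _ => and_iff_right_of_imp le_of_lt) fun _ _ => rfl
  · rw [filter_congr fun t _ => eq_iff_le_not_lt.symm, filter_eq']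
    split_ifs with hr
    · rw [sum_singleton]
    · rw [sum_empty, signJump_of_not_isRoot fun h => hr (by simpa [hp] using h)]

theorem isLocallyConstant_rightSign_sub_sum_signJump {p : ℝ[X]} (hp : p ≠ 0) :
    IsLocallyConstant fun x => (p.rightSign x : ℤ) -
      ∑ r ∈ p.roots.toFinset with r ≤ x, p.signJump r := by
  refine (IsLocallyConstant.iff_eventually_eq _).2 fun r => ?_
  rw [← nhdsNE_sup_pure, ← nhdsLT_sup_nhdsGT, eventually_sup, eventually_sup, eventually_pure]
  refine ⟨⟨?_, ?_⟩, rfl⟩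
  · filter_upwards [eventually_rightSign_nhdsLT hp r,
      eventually_filter_le_nhdsLT p.roots.toFinset r] with x hsign hroots
    rw [hsign, hroots, sum_filter_le_signJump hp, signJump]
    ring
  · filter_upwards [eventually_rightSign_nhdsGT hp r,
      eventually_filter_le_nhdsGT p.roots.toFinset r] with x hsign hroots
    rw [hsign, hroots]

theorem sum_signJump_roots (p : ℝ[X]) :
    ∑ r ∈ p.roots.toFinset, p.signJump r = sign p.leadingCoeff * (1 - (-1) ^ p.natDegree) := by
  rcases eq_or_ne p 0 with rfl | hp
  · simp
  have hlc : sign p.leadingCoeff ≠ 0 := sign_ne_zero.2 (leadingCoeff_ne_zero.2 hp)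
  obtain ⟨y, hy_sign, hy_roots⟩ := ((eventually_sign_eval_atTop p).and
    ((eventually_all_finset p.roots.toFinset).2 fun r _ => eventually_ge_atTop r)).exists
  obtain ⟨x, hx_sign, hx_roots⟩ := ((eventually_sign_eval_atBot p).and
    ((eventually_all_finset p.roots.toFinset).2 fun r _ => eventually_lt_atBot r)).exists
  have hconst := (isLocallyConstant_rightSign_sub_sum_signJump hp).apply_eq_of_preconnectedSpace y x
  rw [filter_true_of_mem hy_roots, filter_false_of_mem fun r hr => not_le.2 (hx_roots r hr),
    sum_empty, rightSign_eq_of_sign_eval hlc hy_sign,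
    rightSign_eq_of_sign_eval (mul_ne_zero (pow_ne_zero _ (by decide)) hlc) hx_sign] at hconst
  push_cast [SignType.coe_one] at hconst
  linear_combination -hconst

/-- Twice the Cauchy index of `g / f` on `ℝ`, when `f` and `g` have no common real root. -/
def twiceCauchyIndex (g f : ℝ[X]) : ℤ :=
  ∑ r ∈ f.roots.toFinset, sign (g.eval r) * f.signJump r

theorem abs_twiceCauchyIndex_le (g f : ℝ[X]) :
    |twiceCauchyIndex g f| ≤ 2 * #f.roots.toFinset := by
  have h (s t u : SignType) : |(s : ℤ) * (t - u)| ≤ 2 := by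
    cases s <;> cases t <;> cases u <;> decide
  calc |twiceCauchyIndex g f| ≤ ∑ r ∈ f.roots.toFinset, |sign (g.eval r) * f.signJump r| :=
        abs_sum_le_sum_abs _ _
    _ ≤ ∑ _r ∈ f.roots.toFinset, 2 := sum_le_sum fun r _ => h _ _ _
    _ = 2 * #f.roots.toFinset := by rw [sum_const, nsmul_eq_mul, mul_comm]

theorem twiceCauchyIndex_add_mul_self (g h f : ℝ[X]) :
    twiceCauchyIndex (g + h * f) f = twiceCauchyIndex g f := by
  refine sum_congr rfl fun r hr => ?_
  rw [eval_add, eval_mul, (isRoot_of_mem_roots (Multiset.mem_toFinset.1 hr)).eq_zero, mul_zero,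
    add_zero]

theorem twiceCauchyIndex_add_twiceCauchyIndex {f g : ℝ[X]} (hfg : ∀ x, f.IsRoot x → ¬g.IsRoot x) :
    twiceCauchyIndex g f + twiceCauchyIndex f g
      = sign (f * g).leadingCoeff * (1 - (-1) ^ (f * g).natDegree) := by
  rcases eq_or_ne (f * g) 0 with h | h
  · rcases mul_eq_zero.1 h with rfl | rfl <;> simp [twiceCauchyIndex]
  have hroot {p : ℝ[X]} {r : ℝ} (hr : r ∈ p.roots.toFinset) : p.IsRoot r :=
    isRoot_of_mem_roots (Multiset.mem_toFinset.1 hr)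
  rw [← sum_signJump_roots, roots_mul h, Multiset.toFinset_add,
    sum_union (disjoint_left.2 fun r hf hg => hfg r (hroot hf) (hroot hg))]
  congr 1 <;> refine sum_congr rfl fun r hr => ?_
  · rw [signJump_mul_of_not_isRoot (hfg r (hroot hr))]
  · rw [mul_comm f g, signJump_mul_of_not_isRoot fun hf => hfg r hf (hroot hr)]

theorem degree_add_C_mul_eq {f g : ℝ[X]} {c : ℝ} (hc : c ≠ 0) (hdeg : g.degree < f.degree) :
    (g + C c * f).degree = f.degree := by
  rw [degree_add_eq_right_of_degree_lt] <;> rw [degree_C_mul hc]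
  exact hdeg

section AddCMulXMul

variable {f g : ℝ[X]} {c : ℝ}

theorem degree_lt_degree_C_mul_X_mul (hc : c ≠ 0) (hg : g ≠ 0) (hdeg : f.degree ≤ g.degree) :
    f.degree < (C c * X * g).degree := by
  rw [degree_mul, degree_C_mul_X hc, degree_eq_natDegree hg, add_comm]
  exact hdeg.trans_lt (by rw [degree_eq_natDegree hg]; exact_mod_cast Nat.lt_succ_self _)

theorem natDegree_add_C_mul_X_mul (hc : c ≠ 0) (hg : g ≠ 0) (hdeg : f.degree ≤ g.degree) :
    (f + C c * X * g).natDegree = g.natDegree + 1 := by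
  rw [natDegree_add_eq_right_of_degree_lt (degree_lt_degree_C_mul_X_mul hc hg hdeg),
    natDegree_mul (by simp [hc]) hg, natDegree_C_mul_X _ hc, add_comm]

theorem leadingCoeff_add_C_mul_X_mul (hc : c ≠ 0) (hg : g ≠ 0) (hdeg : f.degree ≤ g.degree) :
    (f + C c * X * g).leadingCoeff = c * g.leadingCoeff := by
  rw [leadingCoeff_add_of_degree_lt (degree_lt_degree_C_mul_X_mul hc hg hdeg), leadingCoeff_mul,
    leadingCoeff_mul, leadingCoeff_C, leadingCoeff_X, mul_one]

end AddCMulXMul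

section RileyStep

variable {a' b' a b : ℝ[X]} {ε η : ℝ}

theorem not_isRoot_prev_of_riley_step (hb : b = b' + C ε * a')
    (hroot : ∀ x, a'.IsRoot x → ¬b'.IsRoot x) : ∀ x, b.IsRoot x → ¬a'.IsRoot x :=
  fun x hbx ha'x => hroot x ha'x (by simpa [hb, ha'x.eq_zero] using hbx)

theorem not_isRoot_of_riley_step (hb : b = b' + C ε * a') (ha : a = a' + C η * X * b)
    (hroot : ∀ x, a'.IsRoot x → ¬b'.IsRoot x) : ∀ x, a.IsRoot x → ¬b.IsRoot x :=
  fun x hax hbx =>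
    not_isRoot_prev_of_riley_step hb hroot x hbx (by simpa [ha, hbx.eq_zero] using hax)

theorem riley_step_degree (hε : ε ≠ 0) (hη : η ≠ 0) (hb : b = b' + C ε * a')
    (ha : a = a' + C η * X * b) (hdeg : b'.degree < a'.degree) :
    b ≠ 0 ∧ b.natDegree = a'.natDegree ∧ a.natDegree = b.natDegree + 1 ∧
      a.leadingCoeff = η * b.leadingCoeff := by
  have hbdeg : b.degree = a'.degree := hb ▸ degree_add_C_mul_eq hε hdeg
  have hb0 : b ≠ 0 := by
    rintro rfl
    exact (ne_zero_of_degree_gt hdeg) (degree_eq_bot.1 (by rw [← hbdeg, degree_zero]))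
  exact ⟨hb0, natDegree_eq_of_degree_eq hbdeg, ha ▸ natDegree_add_C_mul_X_mul hη hb0 hbdeg.ge,
    ha ▸ leadingCoeff_add_C_mul_X_mul hη hb0 hbdeg.ge⟩

theorem degree_lt_of_riley_step (hε : ε ≠ 0) (hη : η ≠ 0) (hb : b = b' + C ε * a')
    (ha : a = a' + C η * X * b) (hdeg : b'.degree < a'.degree) : b.degree < a.degree := by
  obtain ⟨-, -, hadeg, -⟩ := riley_step_degree hε hη hb ha hdeg
  exact degree_lt_degree (by omega)

theorem twiceCauchyIndex_riley_step (hε : ε ≠ 0) (hη : η ≠ 0) (hb : b = b' + C ε * a')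
    (ha : a = a' + C η * X * b) (hdeg : b'.degree < a'.degree)
    (hroot : ∀ x, a'.IsRoot x → ¬b'.IsRoot x) :
    twiceCauchyIndex b a = twiceCauchyIndex b' a' + 2 * sign η := by
  obtain ⟨hb0, hbdeg, hadeg, halc⟩ := riley_step_degree hε hη hb ha hdeg
  have ha'0 : a' ≠ 0 := ne_zero_of_degree_gt hdeg
  have ha0 : a ≠ 0 := ne_zero_of_natDegree_gt (n := 0) (by omega)
  have hab := twiceCauchyIndex_add_twiceCauchyIndex (not_isRoot_of_riley_step hb ha hroot)
  rw [natDegree_mul ha0 hb0, hadeg, Odd.neg_one_pow ⟨b.natDegree, by ring⟩, leadingCoeff_mul,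
    halc, mul_assoc, sign_mul, sign_pos (mul_self_pos.2 (leadingCoeff_ne_zero.2 hb0)),
    mul_one] at hab
  have hba' := twiceCauchyIndex_add_twiceCauchyIndex (not_isRoot_prev_of_riley_step hb hroot)
  rw [natDegree_mul hb0 ha'0, hbdeg, Even.neg_one_pow ⟨a'.natDegree, rfl⟩, sub_self,
    mul_zero] at hba'
  have hab' : twiceCauchyIndex a b = twiceCauchyIndex a' b := by
    rw [ha, twiceCauchyIndex_add_mul_self]
  have hba'' : twiceCauchyIndex b a' = twiceCauchyIndex b' a' := by
    rw [hb, twiceCauchyIndex_add_mul_self]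
  linear_combination hab - hba' - hab' + hba''

end RileyStep

theorem twiceCauchyIndex_riley {n : ℕ} {ε η : ℕ → ℝ} {a b : ℕ → ℝ[X]} (hε : ∀ k, ε k ≠ 0)
    (hη : ∀ k, η k ≠ 0) (ha0 : a 0 = 1) (hb0 : b 0 = 0)
    (hb : ∀ k < n, b (k + 1) = b k + C (ε (k + 1)) * a k)
    (ha : ∀ k < n, a (k + 1) = a k + C (η (k + 1)) * X * b (k + 1)) :
    twiceCauchyIndex (b n) (a n) = 2 * ∑ k ∈ Icc 1 n, (sign (η k) : ℤ) := by
  suffices ∀ k ≤ n, (b k).degree < (a k).degree ∧ (∀ x, (a k).IsRoot x → ¬(b k).IsRoot x) ∧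
      twiceCauchyIndex (b k) (a k) = 2 * ∑ i ∈ Icc 1 k, (sign (η i) : ℤ) from (this n le_rfl).2.2
  intro k
  induction k with
  | zero => simp [ha0, hb0, twiceCauchyIndex]
  | succ k ih =>
    intro hk
    obtain ⟨hdeg, hroot, hindex⟩ := ih (by omega)
    refine ⟨degree_lt_of_riley_step (hε _) (hη _) (hb k hk) (ha k hk) hdeg,
      not_isRoot_of_riley_step (hb k hk) (ha k hk) hroot, ?_⟩
    rw [twiceCauchyIndex_riley_step (hε _) (hη _) (hb k hk) (ha k hk) hdeg hroot, hindex,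
      sum_Icc_succ_top (by omega)]
    ring

end Polynomial

end

theorem stmt_12_general (n : ℕ) (ε η : ℕ → ℝ)
    (hε : ∀ i, ε i = 1 ∨ ε i = -1) (hη : ∀ i, η i = 1 ∨ η i = -1)
    (hpal : ∀ i, 1 ≤ i → i ≤ n → ε i = η (n + 1 - i))
    (a b : ℕ → Polynomial ℝ)
    (ha0 : a 0 = 1) (hb0 : b 0 = 0)
    (ha : ∀ k, 1 ≤ k → k ≤ n →
      a k = (1 + Polynomial.C (ε k * η k) * Polynomial.X) * a (k-1)
            + Polynomial.C (η k) * Polynomial.X * b (k-1))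
    (hb : ∀ k, 1 ≤ k → k ≤ n →
      b k = Polynomial.C (ε k) * a (k-1) + b (k-1)) :
    |∑ k ∈ Finset.Icc 1 n, ε k| ≤ ((a n).roots.toFinset.card : ℝ) := by
  have hsum : ∑ k ∈ Icc 1 n, ε k = ∑ k ∈ Icc 1 n, η k := by
    refine sum_nbij' (n + 1 - ·) (n + 1 - ·) ?_ ?_ ?_ ?_
      fun i hi => hpal i (mem_Icc.1 hi).1 (mem_Icc.1 hi).2 <;>
      intro i hi <;> simp only [mem_Icc] at hi ⊢ <;> omega
  have hb' (k : ℕ) (hk : k < n) : b (k + 1) = b k + C (ε (k + 1)) * a k := by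
    rw [hb (k + 1) (by omega) hk, Nat.add_sub_cancel, add_comm]
  have ha' (k : ℕ) (hk : k < n) : a (k + 1) = a k + C (η (k + 1)) * X * b (k + 1) := by
    rw [ha (k + 1) (by omega) hk, hb' k hk, Nat.add_sub_cancel, C_mul]
    ring
  have hsign (k : ℕ) : ((sign (η k) : ℤ) : ℝ) = η k := by rcases hη k with h | h <;> simp [h]
  have hindex := twiceCauchyIndex_riley (fun k => by rcases hε k with h | h <;> simp [h])
    (fun k => by rcases hη k with h | h <;> simp [h]) ha0 hb0 hb' ha'
  have hbound : |(twiceCauchyIndex (b n) (a n) : ℝ)| ≤ 2 * #(a n).roots.toFinset := by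
    exact_mod_cast abs_twiceCauchyIndex_le (b n) (a n)
  rw [hindex] at hbound
  push_cast [hsign, abs_mul, abs_two] at hbound
  rw [hsum]
  linarith

theorem stmt_12 (n : ℕ) (ε η : ℕ → ℝ)
    (hε : ∀ i, ε i = 1 ∨ ε i = -1) (hη : ∀ i, η i = 1 ∨ η i = -1)
    (hpal : ∀ i, 1 ≤ i → i ≤ n → ε i = η (n + 1 - i))
    (a b : ℕ → Polynomial ℝ)
    (ha0 : a 0 = 1) (hb0 : b 0 = 0)
    (ha : ∀ k, 1 ≤ k → k ≤ n →
      a k = (1 + Polynomial.C (ε k * η k) * Polynomial.X) * a (k-1)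
            + Polynomial.C (η k) * Polynomial.X * b (k-1))
    (hb : ∀ k, 1 ≤ k → k ≤ n →
      b k = Polynomial.C (ε k) * a (k-1) + b (k-1))
    (hnv : ∀ k ≤ n, ∀ x : ℝ, ¬((a k).eval x = 0 ∧ (b k).eval x = 0)) :
    |∑ k ∈ Finset.Icc 1 n, ε k| ≤ ((a n).roots.toFinset.card : ℝ) :=
  stmt_12_general n ε η hε hη hpal a b ha0 hb0 ha hb
end

section
/- Let f: ℝ → ℤ map each real x avoiding the roots of polynomials f₀,...,fₙ to the number of sign changes in (f₀(x),...,fₙ(x)). If f₀,...,fₙ are nonzero polynomials and Z is the finite union of their real root sets, then v(x) = var(f₀(x),...,fₙ(x)) is locally constant on ℝ \ Z. -/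
/-!
A polynomial is continuous, so each `f k` keeps its sign on a neighbourhood of a point where it
does not vanish. On the intersection of these finitely many neighbourhoods every product
`f k * f (k + 1)` keeps its sign too, and the count of sign changes depends only on those signs.
-/

open Polynomial Finset Filter Topology

/-- Sign changes of the `n + 1` terms `a 0, …, a n`. -/
noncomputable def signChanges (n : ℕ) (a : ℕ → ℝ) : ℕ :=
  #((range n).filter fun k => a k * a (k + 1) < 0)

theorem mul_neg_iff_of_mul_pos {R : Type*} [CommRing R] [LinearOrder R]
    [IsStrictOrderedRing R] {a b a' b' : R} (ha : 0 < a * a') (hb : 0 < b * b') :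
    a * b < 0 ↔ a' * b' < 0 := by
  have hprod : 0 < (a * b) * (a' * b') := by nlinarith [mul_pos ha hb]
  constructor <;> intro h <;> nlinarith

theorem signChanges_congr_of_mul_pos {n : ℕ} {a b : ℕ → ℝ} (h : ∀ k ≤ n, 0 < a k * b k) :
    signChanges n a = signChanges n b := by
  unfold signChanges
  congr 1
  refine filter_congr fun k hk => ?_
  have hkn : k < n := mem_range.1 hk
  exact mul_neg_iff_of_mul_pos (h k hkn.le) (h (k + 1) hkn)

theorem ContinuousAt.eventually_mul_pos {X : Type*} [TopologicalSpace X] {g : X → ℝ} {x : X}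
    (hg : ContinuousAt g x) (hx : g x ≠ 0) : ∀ᶠ y in 𝓝 x, 0 < g y * g x :=
  (hg.mul continuousAt_const).eventually_const_lt (mul_self_pos.2 hx)

theorem eventually_signChanges_eq {X : Type*} [TopologicalSpace X] {n : ℕ} {g : ℕ → X → ℝ}
    {x : X} (hg : ∀ k ≤ n, ContinuousAt (g k) x) (hx : ∀ k ≤ n, g k x ≠ 0) :
    ∀ᶠ y in 𝓝 x, signChanges n (g · y) = signChanges n (g · x) := by
  have hsign : ∀ᶠ y in 𝓝 x, ∀ k ∈ Iic n, 0 < g k y * g k x :=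
    (eventually_all_finset _).2 fun k hk =>
      (hg k (mem_Iic.1 hk)).eventually_mul_pos (hx k (mem_Iic.1 hk))
  filter_upwards [hsign] with y hy
  exact signChanges_congr_of_mul_pos fun k hk => hy k (mem_Iic.2 hk)

theorem stmt_13_general (n : ℕ) (f : ℕ → Polynomial ℝ)
    (Z : Set ℝ) (hZ : Z = {x : ℝ | ∃ k ≤ n, (f k).eval x = 0})
    (x : ℝ) (hx : x ∉ Z) :
    ∃ δ > 0, ∀ y : ℝ, |y - x| < δ →
      ((Finset.range n).filter (fun k => (f k).eval y * (f (k+1)).eval y < 0)).card =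
      ((Finset.range n).filter (fun k => (f k).eval x * (f (k+1)).eval x < 0)).card := by
  have hx0 : ∀ k ≤ n, (f k).eval x ≠ 0 := fun k hk h0 => hx (hZ ▸ ⟨k, hk, h0⟩)
  have hloc := eventually_signChanges_eq (fun k _ => (f k).continuousAt) hx0
  obtain ⟨δ, hδ, hball⟩ := Metric.eventually_nhds_iff.1 hloc
  exact ⟨δ, hδ, fun y hy => hball (by rwa [Real.dist_eq])⟩

theorem stmt_13 (n : ℕ) (f : ℕ → Polynomial ℝ)
    (hf : ∀ k ≤ n, f k ≠ 0)
    (Z : Set ℝ) (hZ : Z = {x : ℝ | ∃ k ≤ n, (f k).eval x = 0})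
    (x : ℝ) (hx : x ∉ Z) :
    ∃ δ > 0, ∀ y : ℝ, |y - x| < δ →
      ((Finset.range n).filter (fun k => (f k).eval y * (f (k+1)).eval y < 0)).card =
      ((Finset.range n).filter (fun k => (f k).eval x * (f (k+1)).eval x < 0)).card :=
  stmt_13_general n f Z hZ x hx
end
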